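/- Let V be a finite set, k ≥ 2 an integer, and w : V → ℝ with 0 ≤ w(x) ≤ 1 for all x ∈ V and 3k/2 − 2 ≤ Σ_{x∈V} w(x) ≤ 3k/2. Then Σ_{S ⊆ V, |S| ≤ k−2} P^V[S] ≤ e^{−k/36} and Σ_{S ⊆ V, |S| ≥ 2k} P^V[S] ≤ e^{−k/54}. -/

import Mathlib

/-!
Chernoff's method. For every `t ≥ 0` the generating function
`∑_S t^{|S|} P^V[S]` factors as `∏_x (1 + (t - 1) w(x)) ≤ exp((t - 1) ∑_x w(x))`, so a tail
`{S | p S}` on which `1 ≤ c t^{|S|}` has mass at most `c exp((t - 1) ∑_x w(x))`. The lower tail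
`|S| ≤ k - 2` is handled with `t = 1/2` and `c = 2^{k-2}`, the upper tail `|S| ≥ 2k` with
`t = 3/2` and `c = (2/3)^{2k}`; what remains are the numerical facts
`log 2 < 13/18 = 3/4 - 1/36` and `exp(83/108) = exp(3/4 + 1/54) ≤ 9/4`.
-/

open Finset

/-- `Pw w V S = (∏_{x∈S} w(x)) · (∏_{x∈V∖S} (1 − w(x)))`. -/
def Pw {α : Type*} [DecidableEq α] (w : α → ℝ) (V S : Finset α) : ℝ :=
  (∏ x ∈ S, w x) * (∏ x ∈ V \ S, (1 - w x))

open Real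

section Chernoff

variable {α : Type*} {w : α → ℝ}

lemma prod_one_add_sub_one_mul_le_exp (hw : ∀ x, 0 ≤ w x ∧ w x ≤ 1) (V : Finset α)
    {t : ℝ} (ht : 0 ≤ t) :
    ∏ x ∈ V, (1 + (t - 1) * w x) ≤ exp ((t - 1) * ∑ x ∈ V, w x) := by
  rw [mul_sum, exp_sum]
  refine prod_le_prod (fun x _ => ?_) fun x _ => ?_
  · nlinarith [hw x]
  · linarith [add_one_le_exp ((t - 1) * w x)]

variable [DecidableEq α]

lemma Pw_nonneg (hw : ∀ x, 0 ≤ w x ∧ w x ≤ 1) (V S : Finset α) : 0 ≤ Pw w V S :=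
  mul_nonneg (prod_nonneg fun x _ => (hw x).1)
    (prod_nonneg fun x _ => sub_nonneg.2 (hw x).2)

lemma sum_powerset_pow_card_mul_Pw (w : α → ℝ) (V : Finset α) (t : ℝ) :
    ∑ S ∈ V.powerset, t ^ #S * Pw w V S = ∏ x ∈ V, (1 + (t - 1) * w x) := by
  calc ∑ S ∈ V.powerset, t ^ #S * Pw w V S
      = ∑ S ∈ V.powerset, (∏ x ∈ S, t * w x) * ∏ x ∈ V \ S, (1 - w x) := by
        refine sum_congr rfl fun S _ => ?_
        rw [Pw, prod_mul_distrib, prod_const, mul_assoc]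
    _ = ∏ x ∈ V, (t * w x + (1 - w x)) := (prod_add _ _ V).symm
    _ = ∏ x ∈ V, (1 + (t - 1) * w x) := prod_congr rfl fun x _ => by ring

theorem sum_filter_Pw_le_mul_exp (hw : ∀ x, 0 ≤ w x ∧ w x ≤ 1) (V : Finset α)
    (p : Finset α → Prop) [DecidablePred p] {t c : ℝ} (ht : 0 ≤ t) (hc : 0 ≤ c)
    (hp : ∀ S, p S → 1 ≤ c * t ^ #S) :
    ∑ S ∈ V.powerset.filter p, Pw w V S ≤ c * exp ((t - 1) * ∑ x ∈ V, w x) := by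
  calc ∑ S ∈ V.powerset.filter p, Pw w V S
      ≤ ∑ S ∈ V.powerset.filter p, c * (t ^ #S * Pw w V S) := by
        refine sum_le_sum fun S hS => ?_
        have := hp S (mem_filter.1 hS).2
        nlinarith [Pw_nonneg hw V S]
    _ ≤ ∑ S ∈ V.powerset, c * (t ^ #S * Pw w V S) :=
        sum_le_sum_of_subset_of_nonneg (filter_subset _ _) fun S _ _ =>
          mul_nonneg hc (mul_nonneg (pow_nonneg ht _) (Pw_nonneg hw V S))
    _ = c * ∏ x ∈ V, (1 + (t - 1) * w x) := by
        rw [← mul_sum, sum_powerset_pow_card_mul_Pw]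
    _ ≤ c * exp ((t - 1) * ∑ x ∈ V, w x) :=
        mul_le_mul_of_nonneg_left (prod_one_add_sub_one_mul_le_exp hw V ht) hc

theorem sum_filter_card_le_Pw_le (hw : ∀ x, 0 ≤ w x ∧ w x ≤ 1) (V : Finset α) (m : ℕ) :
    ∑ S ∈ V.powerset.filter (fun S => #S ≤ m), Pw w V S
      ≤ 2 ^ m * exp (-(∑ x ∈ V, w x) / 2) := by
  convert sum_filter_Pw_le_mul_exp hw V _ (t := 1 / 2) (c := 2 ^ m) (by norm_num)
    (by positivity) fun S hS => ?_ using 3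
  · ring
  · rw [one_div_pow, mul_one_div, one_le_div (by positivity)]
    exact pow_le_pow_right₀ one_le_two hS

theorem sum_filter_le_card_Pw_le (hw : ∀ x, 0 ≤ w x ∧ w x ≤ 1) (V : Finset α) (m : ℕ) :
    ∑ S ∈ V.powerset.filter (fun S => m ≤ #S), Pw w V S
      ≤ (2 / 3) ^ m * exp ((∑ x ∈ V, w x) / 2) := by
  convert sum_filter_Pw_le_mul_exp hw V _ (t := 3 / 2) (c := (2 / 3) ^ m) (by norm_num)
    (by positivity) fun S hS => ?_ using 3
  · ring
  · rw [← inv_div, inv_pow, inv_mul_eq_div, one_le_div (by positivity)]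
    exact pow_le_pow_right₀ (by norm_num) hS

end Chernoff

lemma two_pow_mul_exp_le (m : ℕ) :
    2 ^ m * exp (1 - 3 * ((m : ℝ) + 2) / 4) ≤ exp (-((m : ℝ) + 2) / 36) := by
  have h2 : (2 : ℝ) ≤ exp (13 / 18) := by
    rw [← exp_log two_pos]
    exact exp_le_exp.2 (by linarith [log_two_lt_d9])
  calc 2 ^ m * exp (1 - 3 * ((m : ℝ) + 2) / 4)
      ≤ exp (13 / 18) ^ m * exp (1 - 3 * ((m : ℝ) + 2) / 4) := by gcongr
    _ = exp (-((m : ℝ) + 2) / 36 - 4 / 9) := by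
        rw [← exp_nat_mul, ← exp_add]
        ring_nf
    _ ≤ exp (-((m : ℝ) + 2) / 36) := exp_le_exp.2 (by linarith)

lemma exp_83_div_108_le : exp (83 / 108) ≤ 9 / 4 :=
  calc exp (83 / 108) = exp (83 / 864) ^ 8 := by rw [← exp_nat_mul]; norm_num
    _ ≤ (1 / (1 - 83 / 864)) ^ 8 := by
        gcongr
        exact exp_bound_div_one_sub_of_interval (by norm_num) (by norm_num)
    _ ≤ 9 / 4 := by norm_num

lemma two_div_three_pow_mul_exp_le (k : ℕ) :
    (2 / 3) ^ (2 * k) * exp (3 * (k : ℝ) / 4) ≤ exp (-(k : ℝ) / 54) :=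
  calc (2 / 3) ^ (2 * k) * exp (3 * (k : ℝ) / 4)
      = (4 / 9) ^ k * (exp (83 / 108) ^ k * exp (-(k : ℝ) / 54)) := by
        rw [pow_mul, ← exp_nat_mul, ← exp_add]
        ring_nf
    _ ≤ (4 / 9) ^ k * ((9 / 4) ^ k * exp (-(k : ℝ) / 54)) := by
        gcongr
        exact exp_83_div_108_le
    _ = exp (-(k : ℝ) / 54) := by
        rw [← mul_assoc, ← mul_pow]
        norm_num

/-- for `k ≥ 2` and weights in `[0,1]` with
`3k/2 − 2 ≤ Σ_{x∈V} w(x) ≤ 3k/2`, the tail bounds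
`Σ_{S ⊆ V, |S| ≤ k−2} P^V[S] ≤ e^{−k/36}` and
`Σ_{S ⊆ V, |S| ≥ 2k} P^V[S] ≤ e^{−k/54}` hold. -/
theorem stmt14 {α : Type*} [Fintype α] [DecidableEq α] (w : α → ℝ)
    (hw : ∀ x, 0 ≤ w x ∧ w x ≤ 1) (k : ℕ) (hk : 2 ≤ k)
    (hsum_lo : 3 * (k : ℝ) / 2 - 2 ≤ ∑ x, w x)
    (hsum_hi : ∑ x, w x ≤ 3 * (k : ℝ) / 2) :
    (∑ S ∈ (univ : Finset α).powerset.filter (fun S => S.card ≤ k - 2), Pw w univ S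
        ≤ Real.exp (-(k : ℝ) / 36)) ∧
    (∑ S ∈ (univ : Finset α).powerset.filter (fun S => 2 * k ≤ S.card), Pw w univ S
        ≤ Real.exp (-(k : ℝ) / 54)) := by
  constructor
  · obtain ⟨m, rfl⟩ := Nat.exists_eq_add_of_le' hk
    refine (sum_filter_card_le_Pw_le hw univ _).trans ?_
    rw [Nat.add_sub_cancel]
    push_cast at hsum_lo ⊢
    calc 2 ^ m * exp (-(∑ x, w x) / 2)
        ≤ 2 ^ m * exp (1 - 3 * ((m : ℝ) + 2) / 4) := by gcongr _ * exp ?_; linarith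
      _ ≤ exp (-((m : ℝ) + 2) / 36) := two_pow_mul_exp_le m
  · calc _ ≤ (2 / 3) ^ (2 * k) * exp ((∑ x, w x) / 2) := sum_filter_le_card_Pw_le hw univ _
      _ ≤ (2 / 3) ^ (2 * k) * exp (3 * (k : ℝ) / 4) := by gcongr _ * exp ?_; linarith
      _ ≤ exp (-(k : ℝ) / 54) := two_div_three_pow_mul_exp_le k
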